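/- Let n ≥ 1, 0 ≤ k ≤ n, and r ≥ 0. The pullback map Φ^* restricts to a linear isomorphism from P̊_rΛ^k(T^n) onto P̊̊_{2r+k}Λ^k_e(S^n), the space of even forms in P̊̊_{2r+k}Λ^k(S^n). -/

import Mathlib

open scoped BigOperators
open MeasureTheory

noncomputable section

/-- Vectors in `ℝ^m`. -/
abbrev Vec (m : ℕ) := Fin m → ℝ

/-- Differential `k`-forms on `ℝ^m`, given pointwise as alternating `k`-tensors. -/
abbrev Form (m k : ℕ) := Vec m → (Vec m [⋀^Fin k]→ₗ[ℝ] ℝ)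

/-- A multivariate polynomial has (total) degree at most `r : ℤ`. -/
def degLE {m : ℕ} (r : ℤ) (p : MvPolynomial (Fin m) ℝ) : Prop :=
  ∀ d ∈ p.support, ((d.sum fun _ e => e : ℕ) : ℤ) ≤ r

/-- `P_rΛ^k(ℝ^m)`: differential `k`-forms with polynomial coefficients of degree at most `r`. -/
def PL (m k : ℕ) (r : ℤ) : Set (Form m k) :=
  {α | ∀ v : Fin k → Vec m, ∃ p : MvPolynomial (Fin m) ℝ,
      degLE r p ∧ ∀ x, α x v = MvPolynomial.eval x p}

/-- Interior product with the radial vector field `X = Σ xᵢ ∂/∂xᵢ`. -/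
def iU {m k : ℕ} (β : Form m (k + 1)) : Form m k := fun x => (β x).curryLeft x

/-- `P_r⁻Λ^k(ℝ^m) := i_X P_{r-1}Λ^{k+1}(ℝ^m)`. -/
def PLm (m k : ℕ) (r : ℤ) : Set (Form m k) := iU '' PL m (k + 1) (r - 1)

/-- The reflection negating the `i`-th coordinate, as a map. -/
def reflFun (m : ℕ) (i : Fin m) (u : Vec m) : Vec m := fun j => if j = i then -u j else u j

/-- The reflection negating the `i`-th coordinate, as a linear map. -/
def reflLin (m : ℕ) (i : Fin m) : Vec m →ₗ[ℝ] Vec m :=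
  LinearMap.pi fun j => if j = i then -LinearMap.proj j else LinearMap.proj j

/-- Pullback of an ambient form along the reflection `R_i`. -/
def reflPull (m k : ℕ) (i : Fin m) (α : Form m k) : Form m k :=
  fun x => (α (reflFun m i x)).compLinearMap (reflLin m i)

/-- A form on `ℝ^m` is even if it is invariant under all coordinate reflections. -/
def IsEven (m k : ℕ) (α : Form m k) : Prop := ∀ i, reflPull m k i α = α

/-- A form on `ℝ^m` is odd if every coordinate reflection negates it. -/
def IsOdd (m k : ℕ) (α : Form m k) : Prop := ∀ i, reflPull m k i α = -α

/-- The map `Φ(u) = (u₁², …, u_m²)`. -/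
def Phi (m : ℕ) (u : Vec m) : Vec m := fun i => u i ^ 2

/-- The differential of `Φ` at `u`. -/
def dPhi (m : ℕ) (u : Vec m) : Vec m →ₗ[ℝ] Vec m :=
  LinearMap.pi fun i => (2 * u i) • LinearMap.proj i

/-- Pullback of ambient forms along `Φ`. -/
def phiPull (m k : ℕ) (α : Form m k) : Form m k :=
  fun u => (α (Phi m u)).compLinearMap (dPhi m u)

/-- The standard simplex `T^{m-1} ⊂ ℝ^m`. -/
def simplexSet (m : ℕ) : Set (Vec m) := {x | (∀ i, 0 ≤ x i) ∧ ∑ i, x i = 1}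

/-- The unit sphere `S^{m-1} ⊂ ℝ^m`. -/
def sphereSet (m : ℕ) : Set (Vec m) := {u | ∑ i, u i ^ 2 = 1}

/-- The linear functional `v ↦ ⟨u, v⟩`. -/
def dotLin (m : ℕ) (u : Vec m) : Vec m →ₗ[ℝ] ℝ := ∑ i, u i • LinearMap.proj i

/-- Orthogonal projection onto the tangent space of the sphere at `u`. -/
def projSph (m : ℕ) (u : Vec m) : Vec m →ₗ[ℝ] Vec m :=
  LinearMap.id - (dotLin m u).smulRight u

/-- The linear functional `v ↦ Σ vᵢ`. -/
def sumLin (m : ℕ) : Vec m →ₗ[ℝ] ℝ := ∑ i, LinearMap.proj i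

/-- Orthogonal projection onto the tangent hyperplane `{Σ vᵢ = 0}` of the simplex. -/
def projSim (m : ℕ) : Vec m →ₗ[ℝ] Vec m :=
  LinearMap.id - ((m : ℝ)⁻¹ • sumLin m).smulRight (fun _ => 1)

/-- Differential `k`-forms on a subset `M ⊆ ℝ^m`, encoded at each point by the canonical
alternating tensor on `ℝ^m` that vanishes in the directions normal to `M` (i.e. the
pullback along the inclusion, extended by the tangent projection). -/
abbrev FormOn (m : ℕ) (M : Set (Vec m)) (k : ℕ) := M → (Vec m [⋀^Fin k]→ₗ[ℝ] ℝ)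

/-- Restriction (pullback along the inclusion) of an ambient form to the simplex. -/
def resSim (m k : ℕ) (α : Form m k) : FormOn m (simplexSet m) k :=
  fun x => (α x.1).compLinearMap (projSim m)

/-- Restriction (pullback along the inclusion) of an ambient form to the sphere. -/
def resSph (m k : ℕ) (α : Form m k) : FormOn m (sphereSet m) k :=
  fun u => (α u.1).compLinearMap (projSph m u.1)

/-- `P_rΛ^k(T^{m-1})`. -/
def PLsim (m k : ℕ) (r : ℤ) : Set (FormOn m (simplexSet m) k) := resSim m k '' PL m k r

/-- `P_rΛ^k(S^{m-1})`. -/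
def PLsph (m k : ℕ) (r : ℤ) : Set (FormOn m (sphereSet m) k) := resSph m k '' PL m k r

/-- `P_r⁻Λ^k(T^{m-1})`. -/
def PLmsim (m k : ℕ) (r : ℤ) : Set (FormOn m (simplexSet m) k) := resSim m k '' PLm m k r

/-- `P_r⁻Λ^k(S^{m-1})`. -/
def PLmsph (m k : ℕ) (r : ℤ) : Set (FormOn m (sphereSet m) k) := resSph m k '' PLm m k r

lemma phi_mem_simplex {m : ℕ} {u : Vec m} (hu : u ∈ sphereSet m) :
    Phi m u ∈ simplexSet m :=
  ⟨fun _ => sq_nonneg _, hu⟩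

/-- Pullback `Φ^* : Λ^k(T^{m-1}) → Λ^k(S^{m-1})` along `Φ : S^{m-1} → T^{m-1}`. -/
def phiPullTS (m k : ℕ) (a : FormOn m (simplexSet m) k) : FormOn m (sphereSet m) k :=
  fun u => (a ⟨Phi m u.1, phi_mem_simplex u.2⟩).compLinearMap
    ((dPhi m u.1).comp (projSph m u.1))

lemma refl_mem_sphere {m : ℕ} {i : Fin m} {u : Vec m} (hu : u ∈ sphereSet m) :
    reflFun m i u ∈ sphereSet m := by
  have : ∀ j, (reflFun m i u j) ^ 2 = u j ^ 2 := by
    intro j; simp only [reflFun]; split <;> ring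
  simpa only [sphereSet, Set.mem_setOf_eq, this] using hu

/-- Pullback of a form on the sphere along the reflection `R_i`. -/
def reflPullSph (m k : ℕ) (i : Fin m) (α : FormOn m (sphereSet m) k) :
    FormOn m (sphereSet m) k :=
  fun u => (α ⟨reflFun m i u.1, refl_mem_sphere u.2⟩).compLinearMap (reflLin m i)

/-- A form on the sphere is even if it is invariant under all coordinate reflections. -/
def IsEvenSph (m k : ℕ) (α : FormOn m (sphereSet m) k) : Prop :=
  ∀ i, reflPullSph m k i α = α

/-- A form on the sphere is odd if every coordinate reflection negates it. -/
def IsOddSph (m k : ℕ) (α : FormOn m (sphereSet m) k) : Prop :=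
  ∀ i, reflPullSph m k i α = -α

/-- The bubble function `u_N = u₁ ⋯ u_m`. -/
def bubble (m : ℕ) (u : Vec m) : ℝ := ∏ i, u i

/-- Multiplication of a form on the sphere by the bubble function. -/
def bubbleSmul (m k : ℕ) (α : FormOn m (sphereSet m) k) : FormOn m (sphereSet m) k :=
  fun u => bubble m u.1 • α u

/-- Multiplication of an ambient form by the bubble function. -/
def bubbleSmulAmb (m k : ℕ) (α : Form m k) : Form m k :=
  fun u => bubble m u • α u

/-- The standard volume form on `ℝ^m`. -/
def volForm (m : ℕ) : (Vec m) [⋀^Fin m]→ₗ[ℝ] ℝ := (Pi.basisFun ℝ (Fin m)).det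

/-- Iterated interior product: insert the vectors `v 0, …, v (k-1)` into the
first `k` slots of an alternating `(k+j)`-tensor. -/
def contrMany {m : ℕ} : (k : ℕ) → (Fin k → Vec m) → {j : ℕ} →
    ((Vec m) [⋀^Fin (k + j)]→ₗ[ℝ] ℝ) → ((Vec m) [⋀^Fin j]→ₗ[ℝ] ℝ)
  | 0, _, j, α => α.domDomCongr (finCongr (Nat.zero_add j))
  | (k + 1), v, j, α =>
      contrMany k (fun i => v i.succ)
        ((α.domDomCongr (finCongr (by omega : (k + 1) + j = (k + j) + 1))).curryLeft (v 0))

/-- The Hodge star on alternating tensors on `ℝ^m` (standard metric and orientation):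
`(⋆α)(w₁,…,w_{m-k}) = (1/k!) Σ_g α(e_{g 0},…,e_{g(k-1)}) vol(e_{g 0},…,e_{g(k-1)},w₁,…,w_{m-k})`. -/
def starAlt (m k : ℕ) (α : (Vec m) [⋀^Fin k]→ₗ[ℝ] ℝ) : (Vec m) [⋀^Fin (m - k)]→ₗ[ℝ] ℝ :=
  if h : k ≤ m then
    (k.factorial : ℝ)⁻¹ •
      ∑ g : Fin k → Fin m,
        α (fun i => Pi.single (g i) 1) •
          contrMany k (fun i => Pi.single (g i) 1)
            ((volForm m).domDomCongr (finCongr (by omega : m = k + (m - k))))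
  else 0

/-- The Hodge star `⋆_{ℝ^m}` applied pointwise to ambient forms. -/
def starR (m k : ℕ) (α : Form m k) : Form m (m - k) := fun x => starAlt m k (α x)

/-- The wedge product of alternating tensors. -/
def wedgeAlt {m k l : ℕ} (α : (Vec m) [⋀^Fin k]→ₗ[ℝ] ℝ) (β : (Vec m) [⋀^Fin l]→ₗ[ℝ] ℝ) :
    (Vec m) [⋀^Fin (k + l)]→ₗ[ℝ] ℝ :=
  ((TensorProduct.lid ℝ ℝ).toLinearMap.compAlternatingMap (α.domCoprod β)).domDomCongr
    finSumFinEquiv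

/-- The conormal `ν = Σ uᵢ duᵢ` at `u`, as an alternating 1-tensor. -/
def nuForm (m : ℕ) (u : Vec m) : (Vec m) [⋀^Fin 1]→ₗ[ℝ] ℝ :=
  AlternatingMap.ofSubsingleton ℝ (Vec m) ℝ (0 : Fin 1) (dotLin m u)

/-- The extended Hodge star `⋆_{S^{m-1}} α := ⋆_{ℝ^m}(ν ∧ α)` on ambient forms. -/
def starSphAmb (m k : ℕ) (α : Form m k) : Form m (m - (1 + k)) :=
  fun x => starAlt m (1 + k) (wedgeAlt (nuForm m x) (α x))

/-- The Hodge star of a form on the sphere (w.r.t. the round metric and the orientation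
induced by the outward normal), computed as the restriction of `⋆_{ℝ^m}(ν ∧ ·)`. -/
def starSph (m k : ℕ) (α : FormOn m (sphereSet m) k) :
    FormOn m (sphereSet m) (m - (1 + k)) :=
  fun u => (starAlt m (1 + k) (wedgeAlt (nuForm m u.1) (α u))).compLinearMap (projSph m u.1)

/-- Re-indexing a form along an equality of form degrees. -/
def castForm {m k l : ℕ} (h : k = l) (α : Form m k) : Form m l :=
  fun x => (α x).domDomCongr (finCongr h)

/-- Re-indexing a form on a subset along an equality of form degrees. -/
def castFormOn {m : ℕ} {M : Set (Vec m)} {k l : ℕ} (h : k = l) (α : FormOn m M k) :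
    FormOn m M l :=
  fun x => (α x).domDomCongr (finCongr h)

/-- Trace on the boundary of the simplex vanishes: at every boundary point (a point of some
face `xᵢ = 0`), the form vanishes on vectors tangent to that face. -/
def vanishBdry (m k : ℕ) (a : FormOn m (simplexSet m) k) : Prop :=
  ∀ (x : simplexSet m) (i : Fin m), x.1 i = 0 →
    ∀ v : Fin k → Vec m, (∀ j, (∑ l, v j l) = 0 ∧ v j i = 0) → a x v = 0

/-- `P̊_rΛ^k(T^{m-1})`: forms in `P_rΛ^k(T^{m-1})` with vanishing trace on the boundary. -/
def PLosim (m k : ℕ) (r : ℤ) : Set (FormOn m (simplexSet m) k) :=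
  {a ∈ PLsim m k r | vanishBdry m k a}

/-- `P̊_r⁻Λ^k(T^{m-1})`. -/
def PLmosim (m k : ℕ) (r : ℤ) : Set (FormOn m (simplexSet m) k) :=
  {a ∈ PLmsim m k r | vanishBdry m k a}

/-- A form on the sphere vanishes (as an alternating tensor on the tangent space)
at every point of `S^{m-1} ∩ Γ`, where `Γ = ∪ᵢ {uᵢ = 0}`. -/
def zeroOnGammaSph (m k : ℕ) (α : FormOn m (sphereSet m) k) : Prop :=
  ∀ u : sphereSet m, (∃ i, u.1 i = 0) →
    ∀ v : Fin k → Vec m, (∀ j, ∑ l, u.1 l * v j l = 0) → α u v = 0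

/-- An ambient form vanishes (as an alternating tensor) at every point of `Γ`. -/
def zeroOnGammaAmb (m k : ℕ) (α : Form m k) : Prop :=
  ∀ u : Vec m, (∃ i, u i = 0) → α u = 0

/-- The wedge product of forms on a subset. -/
def wedgeOn {m : ℕ} {M : Set (Vec m)} {k l : ℕ} (a : FormOn m M k) (b : FormOn m M l) :
    FormOn m M (k + l) :=
  fun x => wedgeAlt (a x) (b x)

/-- The base region of the parametrization of the simplex. -/
def baseSimplex (n : ℕ) : Set (Fin n → ℝ) := {y | (∀ j, 0 ≤ y j) ∧ ∑ j, y j ≤ 1}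

/-- Parametrization `y ↦ (1 - Σy, y)` of `T^n` over the base region. -/
def simplexParam (n : ℕ) (y : Fin n → ℝ) : Vec (n + 1) := Fin.cons (1 - ∑ j, y j) y

lemma simplexParam_mem {n : ℕ} {y : Fin n → ℝ} (h : y ∈ baseSimplex n) :
    simplexParam n y ∈ simplexSet (n + 1) := by
  constructor
  · intro i
    refine Fin.cases ?_ ?_ i
    · simpa [simplexParam] using sub_nonneg.mpr h.2
    · intro j; simpa [simplexParam] using h.1 j
  · simp [simplexParam, Fin.sum_cons]

/-- The coordinate tangent vectors `∂x/∂y_j = e_{j+1} - e_0` of the parametrization,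
a positively oriented frame for the orientation of `T^n` induced from the outward-normal
orientation of `S^n` via `Φ`. -/
def simplexTangent (n : ℕ) (j : Fin n) : Vec (n + 1) :=
  Fin.cons (-1) (Pi.single j 1)

open Classical in
/-- The integral of an `n`-form over the oriented simplex `T^n`. -/
def integralSimplex (n : ℕ) (ω : FormOn (n + 1) (simplexSet (n + 1)) n) : ℝ :=
  ∫ y : Fin n → ℝ,
    if h : y ∈ baseSimplex n then ω ⟨simplexParam n y, simplexParam_mem h⟩ (simplexTangent n)
    else 0

/-- Forms on a subset that genuinely are pullbacks to the simplex: they vanish in the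
normal directions (canonical representatives). -/
def TangentialSim (m k : ℕ) (a : FormOn m (simplexSet m) k) : Prop :=
  ∀ x, (a x).compLinearMap (projSim m) = a x

/-- Continuity of a form on a subset. -/
def ContFormOn (m : ℕ) (M : Set (Vec m)) (k : ℕ) (a : FormOn m M k) : Prop :=
  ∀ v : Fin k → Vec m, Continuous fun x : M => a x v

/-- The Riemannian volume form of the round sphere `S^{m-1}` (outward-normal orientation),
i.e. the restriction of `⋆_{ℝ^m} ν`. -/
def volSph (m : ℕ) : FormOn m (sphereSet m) (m - 1) :=
  fun u => (starAlt m 1 (nuForm m u.1)).compLinearMap (projSph m u.1)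


/-! `Φ` is invariant under the reflections `R_i`, so every pullback `Φ^*a` is even, and `Φ` maps
`S^n ∩ {u_i = 0}` to the face `{x_i = 0}`, so vanishing traces pull back to forms vanishing on `Γ`.
Over the points of `T^n` with positive coordinates `x ↦ √x` is a section of `Φ` whose differential
lifts every tangent vector, so `Φ^*a` determines `a` there, and everywhere by continuity.

For surjectivity, average an ambient extension of an even form over the `2^(n+1)` sign changes to
make it even. The coefficient `β(e_{g₀}, …, e_{g_{k-1}})` of an even form is then odd in `u_{g_j}`
and even in every other variable, so it equals `u_{g₀} ⋯ u_{g_{k-1}} h(u²)` with `deg h ≤ r`.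
As `Φ^*dx_i = 2 u_i du_i`, `β` is `Φ^*` of the form with coefficients `h / 2^k`. Vanishing on `Γ`
gives vanishing traces by the same continuity argument on the relative interior of each face.
-/

open MvPolynomial

lemma AlternatingMap.sum_apply {R M N ι κ : Type*} [Semiring R] [AddCommMonoid M] [Module R M]
    [AddCommMonoid N] [Module R N] (s : Finset κ) (A : κ → M [⋀^ι]→ₗ[R] N) (v : ι → M) :
    (∑ a ∈ s, A a) v = ∑ a ∈ s, A a v :=
  map_sum (⟨⟨fun B => B v, rfl⟩, fun _ _ => rfl⟩ : (M [⋀^ι]→ₗ[R] N) →+ N) A s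

lemma AlternatingMap.apply_eq_sum_pi_single {m k : ℕ} (A : Vec m [⋀^Fin k]→ₗ[ℝ] ℝ)
    (v : Fin k → Vec m) :
    A v = ∑ g : Fin k → Fin m, (∏ j, v j (g j)) * A (fun j => Pi.single (g j) 1) := by
  have hv : v = fun j => ∑ i, v j i • (Pi.single i 1 : Vec m) := by
    ext j l; simp [Pi.single_apply]
  conv_lhs => rw [hv, ← A.coe_multilinearMap, A.toMultilinearMap.map_sum]
  exact Finset.sum_congr rfl fun g _ => A.map_smul_univ _ _

lemma MultilinearMap.alternatization_compLinearMap {R M N P ι : Type*} [CommRing R]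
    [AddCommGroup M] [Module R M] [AddCommGroup N] [Module R N] [AddCommGroup P] [Module R P]
    [Fintype ι] [DecidableEq ι] (f : MultilinearMap R (fun _ : ι => M) N) (g : P →ₗ[R] M) :
    (MultilinearMap.alternatization f).compLinearMap g
      = MultilinearMap.alternatization (f.compLinearMap fun _ => g) := by
  ext v
  simp [MultilinearMap.alternatization_apply]

section PolynomialFunctions

variable {m : ℕ}

def polyFun (m d : ℕ) : Submodule ℝ (Vec m → ℝ) where
  carrier := {f | ∃ p : MvPolynomial (Fin m) ℝ, p.totalDegree ≤ d ∧ (fun x => eval x p) = f}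
  add_mem' := by
    rintro _ _ ⟨p, hp, rfl⟩ ⟨q, hq, rfl⟩
    exact ⟨p + q, (totalDegree_add p q).trans (max_le hp hq), by simp [Pi.add_def]⟩
  zero_mem' := ⟨0, by simp, by simp [Pi.zero_def]⟩
  smul_mem' := by
    rintro c _ ⟨p, hp, rfl⟩
    exact ⟨c • p, (totalDegree_smul_le c p).trans hp, by simp [Pi.smul_def]⟩

lemma mul_mem_polyFun {d e : ℕ} {f g : Vec m → ℝ} (hf : f ∈ polyFun m d)
    (hg : g ∈ polyFun m e) : f * g ∈ polyFun m (d + e) := by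
  obtain ⟨p, hp, rfl⟩ := hf
  obtain ⟨q, hq, rfl⟩ := hg
  exact ⟨p * q, (totalDegree_mul p q).trans (add_le_add hp hq), by simp [Pi.mul_def]⟩

lemma prod_apply_mem_polyFun {k : ℕ} (g : Fin k → Fin m) :
    (fun x : Vec m => ∏ j, x (g j)) ∈ polyFun m k := by
  refine ⟨∏ j, X (g j), ?_, by simp⟩
  refine (totalDegree_finsetProd _ _).trans ?_
  simp [totalDegree_X]

lemma comp_Phi_mem_polyFun {d : ℕ} {f : Vec m → ℝ} (hf : f ∈ polyFun m d) :
    f ∘ Phi m ∈ polyFun m (2 * d) := by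
  obtain ⟨p, hp, rfl⟩ := hf
  refine ⟨expand 2 p, by rw [totalDegree_expand]; omega, ?_⟩
  ext x
  simp only [eval_expand, Function.comp_apply]
  rfl

lemma continuous_of_mem_polyFun {d : ℕ} {f : Vec m → ℝ} (hf : f ∈ polyFun m d) :
    Continuous f := by
  obtain ⟨p, -, rfl⟩ := hf
  exact continuous_eval p

lemma degLE_natCast_iff {d : ℕ} {p : MvPolynomial (Fin m) ℝ} :
    degLE (d : ℤ) p ↔ p.totalDegree ≤ d := by
  simp only [degLE, totalDegree, Finset.sup_le_iff, Nat.cast_le]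

lemma mem_PL_iff {k d : ℕ} {α : Form m k} :
    α ∈ PL m k d ↔ ∀ v, (fun x => α x v) ∈ polyFun m d := by
  simp only [PL, Set.mem_ofPred_eq, degLE_natCast_iff, polyFun, Submodule.mem_mk,
    AddSubmonoid.mem_mk, AddSubsemigroup.mem_mk, Set.mem_ofPred_eq, funext_iff, eq_comm]

end PolynomialFunctions

section Pointwise

variable {m : ℕ}

lemma projSim_apply (v : Vec m) (l : Fin m) :
    projSim m v l = v l - (m : ℝ)⁻¹ * ∑ i, v i := by
  simp [projSim, sumLin, LinearMap.smulRight_apply]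

lemma projSim_of_sum_eq_zero {v : Vec m} (h : ∑ i, v i = 0) : projSim m v = v := by
  ext l; rw [projSim_apply, h, mul_zero, sub_zero]

lemma sum_projSim (hm : m ≠ 0) (v : Vec m) : ∑ l, projSim m v l = 0 := by
  simp only [projSim_apply, Finset.sum_sub_distrib, Finset.sum_const, Finset.card_univ,
    Fintype.card_fin, nsmul_eq_mul]
  field_simp
  ring

lemma projSph_apply (u v : Vec m) (l : Fin m) :
    projSph m u v l = v l - (∑ i, u i * v i) * u l := by
  simp [projSph, dotLin, LinearMap.smulRight_apply]

lemma projSph_of_tangent {u v : Vec m} (h : ∑ i, u i * v i = 0) : projSph m u v = v := by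
  ext l; rw [projSph_apply, h, zero_mul, sub_zero]

lemma dPhi_apply (u v : Vec m) (l : Fin m) : dPhi m u v l = 2 * u l * v l := by
  simp [dPhi]

lemma sum_dPhi_projSph {u : Vec m} (hu : u ∈ sphereSet m) (v : Vec m) :
    ∑ l, dPhi m u (projSph m u v) l = 0 := by
  have hterm : ∀ l, dPhi m u (projSph m u v) l
      = 2 * (u l * v l) - (2 * ∑ i, u i * v i) * u l ^ 2 := by
    intro l; rw [dPhi_apply, projSph_apply]; ring
  rw [Finset.sum_congr rfl fun l _ => hterm l, Finset.sum_sub_distrib, ← Finset.mul_sum,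
    ← Finset.mul_sum, show ∑ i, u i ^ 2 = 1 from hu]
  ring

end Pointwise

section Signs

variable {m : ℕ}

def signVec (S : Finset (Fin m)) : Vec m := fun i => if i ∈ S then -1 else 1

lemma signVec_mul_self (S : Finset (Fin m)) : signVec S * signVec S = 1 := by
  ext i; simp only [signVec, Pi.mul_apply, Pi.one_apply]; split_ifs <;> norm_num

lemma signVec_empty : signVec (∅ : Finset (Fin m)) = 1 := by
  ext i; simp [signVec]

lemma signVec_mul_signVec (S T : Finset (Fin m)) :
    signVec S * signVec T = signVec (symmDiff S T) := by
  ext i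
  simp only [signVec, Pi.mul_apply, Finset.mem_symmDiff]
  by_cases hS : i ∈ S <;> by_cases hT : i ∈ T <;> simp [hS, hT]

lemma reflFun_eq_signVec_mul (i : Fin m) (u : Vec m) : reflFun m i u = signVec {i} * u := by
  ext j; by_cases h : j = i <;> simp [reflFun, signVec, h]

lemma reflLin_apply (i : Fin m) (v : Vec m) : reflLin m i v = signVec {i} * v := by
  ext j; by_cases h : j = i <;> simp [reflLin, signVec, h]

lemma signVec_sq (S : Finset (Fin m)) (i : Fin m) : signVec S i ^ 2 = 1 := by
  unfold signVec; split_ifs <;> norm_num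

lemma signVec_mul_mem_sphere (S : Finset (Fin m)) {u : Vec m} (hu : u ∈ sphereSet m) :
    signVec S * u ∈ sphereSet m := by
  simpa [sphereSet, mul_pow, signVec_sq] using hu

lemma Phi_signVec_mul (S : Finset (Fin m)) (u : Vec m) : Phi m (signVec S * u) = Phi m u := by
  ext i; simp [Phi, mul_pow, signVec_sq]

lemma dotProduct_signVec_mul (S : Finset (Fin m)) (u v : Vec m) :
    ∑ i, (signVec S * u) i * (signVec S * v) i = ∑ i, u i * v i := by
  refine Finset.sum_congr rfl fun i _ => ?_
  simp only [Pi.mul_apply]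
  linear_combination (u i * v i) * signVec_sq S i

lemma projSph_signVec_mul (S : Finset (Fin m)) (u v : Vec m) :
    projSph m (signVec S * u) (signVec S * v) = signVec S * projSph m u v := by
  ext l
  rw [Pi.mul_apply, projSph_apply, projSph_apply, dotProduct_signVec_mul, Pi.mul_apply,
    Pi.mul_apply]
  ring

lemma dPhi_signVec_mul (S : Finset (Fin m)) (u w : Vec m) :
    dPhi m (signVec S * u) (signVec S * w) = dPhi m u w := by
  ext l
  simp only [dPhi_apply, Pi.mul_apply]
  linear_combination (2 * u l * w l) * signVec_sq S l

lemma signVec_insert {S : Finset (Fin m)} {i : Fin m} (hi : i ∉ S) :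
    signVec (insert i S) = signVec {i} * signVec S := by
  ext l
  by_cases h : l = i
  · simp [signVec, h, hi]
  · simp [signVec, h]

lemma signVec_mul_pi_single (S : Finset (Fin m)) (l : Fin m) :
    signVec S * Pi.single l 1 = signVec S l • (Pi.single l 1 : Vec m) := by
  ext t
  by_cases h : t = l
  · subst h; simp
  · simp [h]

lemma prod_signVec_singleton (i : Fin m) (T : Finset (Fin m)) :
    ∏ l ∈ T, signVec {i} l = signVec T i := by
  simp [signVec, eq_comm]

end Signs

section SignFlip

variable {m : ℕ}

def signFlip (ε : Vec m) : MvPolynomial (Fin m) ℝ →ₐ[ℝ] MvPolynomial (Fin m) ℝ :=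
  bind₁ fun i => C (ε i) * X i

lemma eval_signFlip (ε x : Vec m) (p : MvPolynomial (Fin m) ℝ) :
    eval x (signFlip ε p) = eval (ε * x) p := by
  change eval₂Hom (RingHom.id ℝ) x (bind₁ _ p) = _
  rw [eval₂Hom_bind₁]
  simp [Pi.mul_def]

lemma coeff_signFlip (ε : Vec m) (d : Fin m →₀ ℕ) (p : MvPolynomial (Fin m) ℝ) :
    coeff d (signFlip ε p) = d.prod (fun i n => ε i ^ n) * coeff d p := by
  induction p using MvPolynomial.induction_on' with
  | monomial e c =>
    have : signFlip ε (monomial e c) = monomial e (e.prod (fun i n => ε i ^ n) * c) := by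
      rw [signFlip, bind₁_monomial, monomial_eq]
      simp only [Finsupp.prod, mul_pow, Finset.prod_mul_distrib, ← map_pow, ← map_prod, map_mul]
      ring
    rw [this, coeff_monomial, coeff_monomial]
    split_ifs with h <;> simp [h]
  | add p q hp hq => rw [map_add, coeff_add, coeff_add, hp, hq, mul_add]

lemma comp_mul_mem_polyFun {d : ℕ} (ε : Vec m) {f : Vec m → ℝ} (hf : f ∈ polyFun m d) :
    (fun x => f (ε * x)) ∈ polyFun m d := by
  obtain ⟨p, hp, rfl⟩ := hf
  refine ⟨signFlip ε p, le_trans (totalDegree_le_of_support_subset fun d hd => ?_) hp, ?_⟩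
  · rw [mem_support_iff, coeff_signFlip] at hd
    exact mem_support_iff.mpr (right_ne_zero_of_mul hd)
  · ext x; exact eval_signFlip ε x p

end SignFlip

section Halving

variable {m : ℕ}

lemma exists_eq_prod_X_mul_expand {p : MvPolynomial (Fin m) ℝ} {S : Finset (Fin m)} {r : ℕ}
    (hdeg : p.totalDegree ≤ 2 * r + S.card)
    (hpar : ∀ d ∈ p.support, ∀ i, Odd (d i) ↔ i ∈ S) :
    ∃ h : MvPolynomial (Fin m) ℝ, h.totalDegree ≤ r ∧ p = (∏ i ∈ S, X i) * expand 2 h := by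
  classical
  let half (d : Fin m →₀ ℕ) : Fin m →₀ ℕ := Finsupp.mapRange (· / 2) (Nat.zero_div 2) d
  have hsplit : ∀ d ∈ p.support, ∀ i, d i = (if i ∈ S then 1 else 0) + 2 * half d i := by
    intro d hd i
    have := hpar d hd i
    simp only [Finsupp.mapRange_apply, half]
    split_ifs with hi
    · obtain ⟨c, hc⟩ := this.mpr hi; omega
    · obtain ⟨c, hc⟩ := Nat.not_odd_iff_even.mp (mt this.mp hi); omega
  refine ⟨∑ d ∈ p.support, monomial (half d) (coeff d p), ?_, ?_⟩
  · refine (totalDegree_finsetSum _ _).trans (Finset.sup_le fun d hd => ?_)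
    refine (totalDegree_monomial_le _ _).trans ?_
    have hd' := (le_totalDegree hd).trans hdeg
    rw [Finsupp.sum_fintype _ _ fun _ => rfl] at hd' ⊢
    rw [Finset.sum_congr rfl fun i _ => hsplit d hd i, Finset.sum_add_distrib,
      Finset.sum_boole, ← Finset.mul_sum, Finset.filter_mem_eq_inter, Finset.univ_inter] at hd'
    simp only [id_eq]
    push_cast at hd'
    omega
  · conv_lhs => rw [p.as_sum]
    rw [map_sum, Finset.mul_sum]
    refine Finset.sum_congr rfl fun d hd => ?_
    have hX : ∏ i ∈ S, (X i : MvPolynomial (Fin m) ℝ)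
        = monomial (∑ i ∈ S, Finsupp.single i 1) 1 :=
      (monomial_sum_one S _).symm
    have hd' : ∑ i ∈ S, Finsupp.single i 1 + 2 • half d = d := by
      ext i
      simp only [Finsupp.add_apply, Finsupp.finsetSum_apply, Finsupp.single_apply,
        Finset.sum_ite_eq', Finsupp.smul_apply, smul_eq_mul]
      exact (hsplit d hd i).symm
    rw [expand_monomial, hX, monomial_mul, one_mul, hd']

lemma exists_eq_prod_mul_comp_Phi {f : Vec m → ℝ} {S : Finset (Fin m)} {r : ℕ}
    (hf : f ∈ polyFun m (2 * r + S.card))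
    (hrefl : ∀ i x, f (signVec {i} * x) = signVec S i * f x) :
    ∃ h ∈ polyFun m r, ∀ x, f x = (∏ i ∈ S, x i) * h (Phi m x) := by
  obtain ⟨p, hp, rfl⟩ := hf
  have hpar : ∀ d ∈ p.support, ∀ i, Odd (d i) ↔ i ∈ S := by
    intro d hd i
    have hflip : signFlip (signVec {i}) p = C (signVec S i) * p :=
      MvPolynomial.funext fun x => by simp [eval_signFlip, hrefl]
    have hc := congrArg (coeff d) hflip
    have hsign : d.prod (fun l n => signVec {i} l ^ n) = (-1) ^ d i := by
      simp [Finsupp.prod_fintype, signVec, ite_pow, Finset.prod_ite_eq']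
    rw [coeff_signFlip, coeff_C_mul, hsign] at hc
    have hc' := mul_right_cancel₀ (mem_support_iff.mp hd) hc
    by_cases hi : i ∈ S
    · simp only [hi, signVec, if_true, iff_true] at hc' ⊢
      exact (neg_one_pow_eq_neg_one_iff_odd (by norm_num)).mp hc'
    · simp only [hi, signVec, if_false, iff_false, Nat.not_odd_iff_even] at hc' ⊢
      exact (neg_one_pow_eq_one_iff_even (by norm_num)).mp hc'
  obtain ⟨h, hh, rfl⟩ := exists_eq_prod_X_mul_expand hp hpar
  refine ⟨fun y => eval y h, ⟨h, hh, rfl⟩, fun x => ?_⟩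
  simp only [map_mul, map_prod, eval_X, eval_expand]
  rfl

end Halving

section Pullback

variable {m k : ℕ}

lemma phiPullTS_apply_of_tangent (a : FormOn m (simplexSet m) k) (u : sphereSet m)
    {w : Fin k → Vec m} (hw : ∀ j, ∑ l, u.1 l * w j l = 0) :
    phiPullTS m k a u w = a ⟨Phi m u, phi_mem_simplex u.2⟩ (fun j => dPhi m u (w j)) := by
  simp only [phiPullTS, AlternatingMap.compLinearMap_apply, LinearMap.comp_apply,
    projSph_of_tangent (hw _)]

lemma phiPullTS_resSim (γ : Form m k) :
    phiPullTS m k (resSim m k γ) = resSph m k (phiPull m k γ) := by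
  ext u v
  simp only [phiPullTS, resSim, resSph, phiPull, AlternatingMap.compLinearMap_apply,
    LinearMap.comp_apply, projSim_of_sum_eq_zero (sum_dPhi_projSph u.2 _)]

lemma phiPullTS_add (a b : FormOn m (simplexSet m) k) :
    phiPullTS m k (a + b) = phiPullTS m k a + phiPullTS m k b := by
  ext u v; simp [phiPullTS]

lemma phiPullTS_smul (c : ℝ) (a : FormOn m (simplexSet m) k) :
    phiPullTS m k (c • a) = c • phiPullTS m k a := by
  ext u v; simp [phiPullTS]

lemma zeroOnGammaSph_phiPullTS {a : FormOn m (simplexSet m) k} (ha : vanishBdry m k a) :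
    zeroOnGammaSph m k (phiPullTS m k a) := by
  rintro u ⟨i, hui⟩ v hv
  rw [phiPullTS_apply_of_tangent a u hv]
  refine ha _ i (by simp [Phi, hui]) _ fun j => ⟨?_, by simp [dPhi_apply, hui]⟩
  simpa [projSph_of_tangent (hv j)] using sum_dPhi_projSph u.2 (v j)

lemma isEvenSph_phiPullTS (a : FormOn m (simplexSet m) k) :
    IsEvenSph m k (phiPullTS m k a) := by
  intro i
  ext u v
  simp only [reflPullSph, phiPullTS, AlternatingMap.compLinearMap_apply, LinearMap.comp_apply,
    reflLin_apply, reflFun_eq_signVec_mul, projSph_signVec_mul, dPhi_signVec_mul,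
    Phi_signVec_mul]

lemma phiPull_mem_PL {r : ℕ} {γ : Form m k} (hγ : γ ∈ PL m k r) :
    phiPull m k γ ∈ PL m k (2 * r + k : ℕ) := by
  rw [mem_PL_iff] at hγ ⊢
  intro v
  have hexp : (fun u => phiPull m k γ u v) = ∑ g : Fin k → Fin m, (2 ^ k * ∏ j, v j (g j)) •
      ((fun u : Vec m => ∏ j, u (g j)) * ((fun x => γ x fun j => Pi.single (g j) 1) ∘ Phi m)) := by
    ext u
    rw [phiPull, AlternatingMap.compLinearMap_apply, AlternatingMap.apply_eq_sum_pi_single]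
    simp only [Finset.sum_apply, Pi.smul_apply, Pi.mul_apply, Function.comp_apply, smul_eq_mul,
      dPhi_apply, Finset.prod_mul_distrib, Finset.prod_const, Finset.card_univ, Fintype.card_fin]
    refine Finset.sum_congr rfl fun g _ => by ring
  rw [hexp, add_comm]
  exact Submodule.sum_mem _ fun g _ => Submodule.smul_mem _ _
    (mul_mem_polyFun (prod_apply_mem_polyFun g) (comp_Phi_mem_polyFun (hγ _)))

end Pullback

section Lifting

variable {m k : ℕ}

lemma sqrt_mem_sphere {x : Vec m} (hx : x ∈ simplexSet m) : (fun i => √(x i)) ∈ sphereSet m := by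
  simpa [sphereSet, Real.sq_sqrt (hx.1 _)] using hx.2

lemma Phi_sqrt {x : Vec m} (hx : ∀ i, 0 ≤ x i) : Phi m (fun i => √(x i)) = x := by
  ext i; exact Real.sq_sqrt (hx i)

/-- The preimage of `t` under `dPhi` at `√x`; where `x l = 0` the division by zero makes the
entry `0`, which is right when `t l = 0` there. -/
def sqrtLift (x t : Vec m) : Vec m := fun l => t l / (2 * √(x l))

lemma dPhi_sqrtLift {x t : Vec m} (hx : ∀ l, 0 ≤ x l) (ht : ∀ l, x l = 0 → t l = 0) :
    dPhi m (fun l => √(x l)) (sqrtLift x t) = t := by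
  ext l
  rw [dPhi_apply, sqrtLift]
  by_cases h : x l = 0
  · simp [h, ht l h]
  · have : 0 < √(x l) := Real.sqrt_pos.mpr ((hx l).lt_of_ne' h)
    field_simp

lemma sum_sqrt_mul_sqrtLift {x t : Vec m} (hx : ∀ l, 0 ≤ x l) (ht : ∀ l, x l = 0 → t l = 0) :
    ∑ l, √(x l) * sqrtLift x t l = (∑ l, t l) / 2 := by
  rw [Finset.sum_div]
  refine Finset.sum_congr rfl fun l _ => ?_
  rw [← congrFun (dPhi_sqrtLift hx ht) l, dPhi_apply]
  ring

lemma phiPullTS_sqrtLift (a : FormOn m (simplexSet m) k) {x : Vec m} (hx : x ∈ simplexSet m)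
    {t : Fin k → Vec m} (ht : ∀ j, ∑ l, t j l = 0) (hsupp : ∀ j l, x l = 0 → t j l = 0) :
    phiPullTS m k a ⟨_, sqrt_mem_sphere hx⟩ (fun j => sqrtLift x (t j)) = a ⟨x, hx⟩ t := by
  rw [phiPullTS_apply_of_tangent a _ fun j => by
    simp [sum_sqrt_mul_sqrtLift hx.1 (hsupp j), ht j]]
  simp only [dPhi_sqrtLift hx.1 (hsupp _), Phi_sqrt hx.1]

end Lifting

section Density

variable {m : ℕ}

def faceCenter (Z : Finset (Fin m)) : Vec m := fun l => if l ∈ Z then 0 else (Zᶜ.card : ℝ)⁻¹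

lemma faceCenter_mem {Z : Finset (Fin m)} (hZ : Zᶜ.Nonempty) : faceCenter Z ∈ simplexSet m := by
  refine ⟨fun l => by unfold faceCenter; split_ifs <;> positivity, ?_⟩
  have : (Zᶜ.card : ℝ) ≠ 0 := by exact_mod_cast hZ.card_pos.ne'
  simp [faceCenter, Finset.sum_ite, Finset.filter_not, ← Finset.compl_eq_univ_sdiff, this]

lemma faceCenter_pos {Z : Finset (Fin m)} {l : Fin m} (hl : l ∉ Z) : 0 < faceCenter Z l := by
  have : 0 < Zᶜ.card := Finset.card_pos.mpr ⟨l, Finset.mem_compl.mpr hl⟩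
  simp only [faceCenter, if_neg hl]
  positivity

lemma eq_of_eqOn_openFace {f g : Vec m → ℝ} (hf : Continuous f) (hg : Continuous g)
    {Z : Finset (Fin m)} (hZ : Zᶜ.Nonempty) {x : Vec m} (hx : x ∈ simplexSet m)
    (hxZ : ∀ l ∈ Z, x l = 0)
    (h : ∀ y ∈ simplexSet m, (∀ l, y l = 0 ↔ l ∈ Z) → f y = g y) : f x = g x := by
  let y (s : ℝ) : Vec m := (1 - s) • x + s • faceCenter Z
  have hy : ∀ s ∈ Set.Ioc (0 : ℝ) 1, y s ∈ simplexSet m ∧ ∀ l, y s l = 0 ↔ l ∈ Z := by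
    rintro s ⟨hs0, hs1⟩
    refine ⟨convex_stdSimplex ℝ (Fin m) hx (faceCenter_mem hZ) (by linarith) hs0.le (by ring),
      fun l => ⟨fun hl => ?_, fun hl => ?_⟩⟩
    · by_contra hlZ
      have := mul_nonneg (sub_nonneg.mpr hs1) (hx.1 l)
      have := mul_pos hs0 (faceCenter_pos hlZ)
      simp only [y, Pi.add_apply, Pi.smul_apply, smul_eq_mul] at hl
      linarith
    · simp [y, hxZ l hl, faceCenter, hl]
  have hcont : Continuous y := by fun_prop
  have hEq : Set.EqOn (f ∘ y) (g ∘ y) (Set.Ioc 0 1) := fun s hs => h _ (hy s hs).1 (hy s hs).2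
  have := hEq.closure (hf.comp hcont) (hg.comp hcont)
    (by rw [closure_Ioc zero_ne_one]; exact ⟨le_rfl, zero_le_one⟩)
  simpa [y] using this

end Density

section Injectivity

variable {m k : ℕ}

lemma resSim_apply_of_sum_eq_zero (γ : Form m k) (x : simplexSet m) {t : Fin k → Vec m}
    (ht : ∀ j, ∑ l, t j l = 0) : resSim m k γ x t = γ x t := by
  simp [resSim, projSim_of_sum_eq_zero (ht _)]

lemma resSim_eq_of_phiPullTS_eq (hm : m ≠ 0) {d : ℕ} {γ δ : Form m k} (hγ : γ ∈ PL m k d)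
    (hδ : δ ∈ PL m k d) (h : phiPullTS m k (resSim m k γ) = phiPullTS m k (resSim m k δ)) :
    resSim m k γ = resSim m k δ := by
  ext x v
  set t := fun j => projSim m (v j)
  have ht : ∀ j, ∑ l, t j l = 0 := fun j => sum_projSim hm (v j)
  change γ x t = δ x t
  rw [mem_PL_iff] at hγ hδ
  have hne : (∅ : Finset (Fin m))ᶜ.Nonempty := by
    simpa [Finset.univ_nonempty_iff] using Fin.pos_iff_nonempty.mp (Nat.pos_of_ne_zero hm)
  refine eq_of_eqOn_openFace (continuous_of_mem_polyFun (hγ t))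
    (continuous_of_mem_polyFun (hδ t)) hne x.2 (by simp) fun y hy hyZ => ?_
  have hsupp : ∀ j l, y l = 0 → t j l = 0 := fun j l hl => by simpa using (hyZ l).mp hl
  rw [← resSim_apply_of_sum_eq_zero γ ⟨y, hy⟩ ht, ← resSim_apply_of_sum_eq_zero δ ⟨y, hy⟩ ht,
    ← phiPullTS_sqrtLift _ hy ht hsupp, ← phiPullTS_sqrtLift _ hy ht hsupp, h]

lemma vanishBdry_of_zeroOnGammaSph (hm : 2 ≤ m) {d : ℕ} {γ : Form m k} (hγ : γ ∈ PL m k d)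
    (h : zeroOnGammaSph m k (phiPullTS m k (resSim m k γ))) : vanishBdry m k (resSim m k γ) := by
  intro x i hxi w hw
  have hw0 : ∀ j, ∑ l, w j l = 0 := fun j => (hw j).1
  rw [resSim_apply_of_sum_eq_zero γ x hw0]
  rw [mem_PL_iff] at hγ
  have hne : ({i} : Finset (Fin m))ᶜ.Nonempty := by
    rw [← Finset.card_pos, Finset.card_compl, Finset.card_singleton, Fintype.card_fin]
    omega
  refine eq_of_eqOn_openFace (g := 0) (continuous_of_mem_polyFun (hγ w)) continuous_const hne
    x.2 (by simpa using hxi) fun y hy hyZ => ?_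
  have hsupp : ∀ j l, y l = 0 → w j l = 0 := fun j l hl => by
    rw [Finset.mem_singleton.mp ((hyZ l).mp hl)]; exact (hw j).2
  have hyi : y i = 0 := (hyZ i).mpr (Finset.mem_singleton_self i)
  rw [← resSim_apply_of_sum_eq_zero γ ⟨y, hy⟩ hw0, ← phiPullTS_sqrtLift _ hy hw0 hsupp]
  exact h _ ⟨i, by simp [hyi]⟩ _ fun j => by simp [sum_sqrt_mul_sqrtLift hy.1 (hsupp j), hw0 j]

end Injectivity

section Symmetrization

variable {m k : ℕ}

def signPull (ε : Vec m) (β : Form m k) : Form m k :=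
  fun u => (β (ε * u)).compLinearMap (LinearMap.mulLeft ℝ ε)

lemma reflPull_signPull (i : Fin m) (S : Finset (Fin m)) (β : Form m k) :
    reflPull m k i (signPull (signVec S) β) = signPull (signVec (symmDiff S {i})) β := by
  ext u v
  simp only [reflPull, signPull, AlternatingMap.compLinearMap_apply, reflFun_eq_signVec_mul,
    reflLin_apply, LinearMap.mulLeft_apply, ← mul_assoc, signVec_mul_signVec]

lemma resSph_signPull (S : Finset (Fin m)) (β : Form m k) (u : sphereSet m) (v : Fin k → Vec m) :
    resSph m k (signPull (signVec S) β) u v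
      = resSph m k β ⟨_, signVec_mul_mem_sphere S u.2⟩ (fun j => signVec S * v j) := by
  simp only [resSph, signPull, AlternatingMap.compLinearMap_apply, LinearMap.mulLeft_apply,
    projSph_signVec_mul]

lemma IsEvenSph.apply_signVec_mul {α : FormOn m (sphereSet m) k} (hα : IsEvenSph m k α)
    (S : Finset (Fin m)) (u : sphereSet m) (v : Fin k → Vec m) :
    α ⟨_, signVec_mul_mem_sphere S u.2⟩ (fun j => signVec S * v j) = α u v := by
  induction S using Finset.induction_on with
  | empty => simp only [signVec_empty, one_mul]
  | insert i S hi ih =>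
    conv_rhs => rw [← ih, ← hα i]
    simp only [reflPullSph, AlternatingMap.compLinearMap_apply, reflFun_eq_signVec_mul,
      reflLin_apply, signVec_insert hi, mul_assoc]

def symmAvg (β : Form m k) : Form m k :=
  ((2 : ℝ) ^ m)⁻¹ • ∑ S : Finset (Fin m), signPull (signVec S) β

lemma isEven_symmAvg (β : Form m k) : IsEven m k (symmAvg β) := by
  intro i
  have hinv : Function.Involutive fun S : Finset (Fin m) => symmDiff S {i} :=
    fun S => symmDiff_symmDiff_cancel_right {i} S
  ext u v
  simp only [symmAvg, reflPull, AlternatingMap.compLinearMap_apply, Pi.smul_apply,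
    Finset.sum_apply, AlternatingMap.smul_apply, AlternatingMap.sum_apply]
  congr 1
  rw [← Equiv.sum_comp (hinv.toPerm _) fun S => signPull (signVec S) β u v]
  refine Finset.sum_congr rfl fun S _ => ?_
  rw [Function.Involutive.coe_toPerm, ← reflPull_signPull]
  rfl

lemma symmAvg_mem_PL {d : ℕ} {β : Form m k} (hβ : β ∈ PL m k d) : symmAvg β ∈ PL m k d := by
  rw [mem_PL_iff] at hβ ⊢
  intro v
  have : (fun x => symmAvg β x v) = ((2 : ℝ) ^ m)⁻¹ •
      ∑ S : Finset (Fin m), fun x => β (signVec S * x) (fun j => signVec S * v j) := by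
    ext x
    simp [symmAvg, signPull, Finset.sum_apply, AlternatingMap.sum_apply]
  rw [this]
  exact Submodule.smul_mem _ _ (Submodule.sum_mem _ fun S _ => comp_mul_mem_polyFun _ (hβ _))

lemma resSph_symmAvg {β : Form m k} {α : FormOn m (sphereSet m) k} (hβ : resSph m k β = α)
    (hα : IsEvenSph m k α) : resSph m k (symmAvg β) = α := by
  ext u v
  have h : ∀ S : Finset (Fin m), resSph m k (signPull (signVec S) β) u v = α u v := fun S => by
    rw [resSph_signPull, hβ, hα.apply_signVec_mul]
  simp only [resSph, symmAvg, AlternatingMap.compLinearMap_apply, Pi.smul_apply,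
    AlternatingMap.smul_apply, Finset.sum_apply, AlternatingMap.sum_apply] at h ⊢
  simp [h]

end Symmetrization

section Reconstruction

variable {m k : ℕ}

lemma IsEven.apply_signVec_mul_pi_single {β : Form m k} (hβ : IsEven m k β) (i : Fin m)
    {g : Fin k → Fin m} (hg : Function.Injective g) (x : Vec m) :
    β (signVec {i} * x) (fun j => Pi.single (g j) 1)
      = signVec (Finset.univ.image g) i * β x (fun j => Pi.single (g j) 1) := by
  conv_lhs => rw [← hβ i]
  simp only [reflPull, AlternatingMap.compLinearMap_apply, reflFun_eq_signVec_mul, reflLin_apply,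
    ← mul_assoc, signVec_mul_self, one_mul, signVec_mul_pi_single, AlternatingMap.map_smul_univ]
  rw [← prod_signVec_singleton, Finset.prod_image fun _ _ _ _ h => hg h, smul_eq_mul]

lemma exists_pi_single_eq_prod_mul_comp_Phi {r : ℕ} {β : Form m k}
    (hβ : β ∈ PL m k (2 * r + k : ℕ)) (hev : IsEven m k β) (g : Fin k → Fin m) :
    ∃ h ∈ polyFun m r, ∀ x, β x (fun j => Pi.single (g j) 1) = (∏ j, x (g j)) * h (Phi m x) := by
  by_cases hg : Function.Injective g
  · have hcard : (Finset.univ.image g).card = k := by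
      rw [Finset.card_image_of_injective _ hg, Finset.card_univ, Fintype.card_fin]
    obtain ⟨h, hh, hx⟩ := exists_eq_prod_mul_comp_Phi
      (f := fun x => β x fun j => Pi.single (g j) 1) (S := Finset.univ.image g) (r := r)
      (by rw [hcard]; exact mem_PL_iff.mp hβ _) (hev.apply_signVec_mul_pi_single · hg)
    refine ⟨h, hh, fun x => ?_⟩
    rw [hx, Finset.prod_image fun _ _ _ _ h => hg h]
  · obtain ⟨j₁, j₂, hj, hne⟩ := Function.not_injective_iff.mp hg
    exact ⟨0, Submodule.zero_mem _, fun x =>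
      by simpa using (β x).map_eq_zero_of_eq _ (by simp [hj]) hne⟩

lemma exists_phiPull_eq {r : ℕ} {β : Form m k} (hβ : β ∈ PL m k (2 * r + k : ℕ))
    (hev : IsEven m k β) : ∃ γ ∈ PL m k r, phiPull m k γ = β := by
  choose h hh hβh using exists_pi_single_eq_prod_mul_comp_Phi hβ hev
  -- `Φ^*dx_i = 2 u_i du_i` accounts for the factor `2⁻ᵏ`, and alternatizing an alternating map
  -- multiplies it by `k!`.
  let N (x : Vec m) : MultilinearMap ℝ (fun _ : Fin k => Vec m) ℝ :=
    ∑ g : Fin k → Fin m, (((2 : ℝ) ^ k)⁻¹ * h g x) •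
      (MultilinearMap.mkPiAlgebra ℝ (Fin k) ℝ).compLinearMap fun j => LinearMap.proj (g j)
  have hN : ∀ x v, N x v = ∑ g : Fin k → Fin m, ((2 : ℝ) ^ k)⁻¹ * h g x * ∏ j, v j (g j) := by
    intro x v; simp [N]
  refine ⟨fun x => (k.factorial : ℝ)⁻¹ • MultilinearMap.alternatization (N x), ?_, ?_⟩
  · rw [mem_PL_iff]
    intro v
    have : (fun x => ((k.factorial : ℝ)⁻¹ • MultilinearMap.alternatization (N x)) v)
        = (k.factorial : ℝ)⁻¹ • ∑ σ : Equiv.Perm (Fin k), ((Equiv.Perm.sign σ : ℤ) : ℝ) •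
          ∑ g : Fin k → Fin m, (((2 : ℝ) ^ k)⁻¹ * ∏ j, v (σ j) (g j)) • h g := by
      ext x
      simp [MultilinearMap.alternatization_apply, hN, Finset.mul_sum, Units.smul_def]
      exact Finset.sum_congr rfl fun σ _ => Finset.sum_congr rfl fun g _ => by ring
    rw [this]
    exact Submodule.smul_mem _ _ (Submodule.sum_mem _ fun σ _ => Submodule.smul_mem _ _
      (Submodule.sum_mem _ fun g _ => Submodule.smul_mem _ _ (hh g)))
  · ext u v
    have hpull : (N (Phi m u)).compLinearMap (fun _ => dPhi m u) = (β u).toMultilinearMap := by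
      refine MultilinearMap.ext fun w => ?_
      rw [MultilinearMap.compLinearMap_apply, hN, AlternatingMap.coe_multilinearMap,
        AlternatingMap.apply_eq_sum_pi_single]
      refine Finset.sum_congr rfl fun g _ => ?_
      simp only [hβh, dPhi_apply, Finset.prod_mul_distrib,
        Finset.prod_const, Finset.card_univ, Fintype.card_fin]
      field_simp
    have hk : (k.factorial : ℝ) ≠ 0 := by positivity
    have := congrArg (fun A => A v) (AlternatingMap.coe_alternatization (β u))
    simp only [← hpull, ← MultilinearMap.alternatization_compLinearMap] at this
    simp only [AlternatingMap.compLinearMap_apply, AlternatingMap.smul_apply, Fintype.card_fin,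
      nsmul_eq_mul] at this
    simp only [phiPull, AlternatingMap.compLinearMap_apply, AlternatingMap.smul_apply, smul_eq_mul,
      this]
    field_simp

end Reconstruction

theorem stmt10_general (n k r : ℕ) (hn : 1 ≤ n) :
    Set.BijOn (phiPullTS (n + 1) k) (PLosim (n + 1) k (r : ℤ))
      {α | α ∈ PLsph (n + 1) k (2 * (r : ℤ) + k) ∧ zeroOnGammaSph (n + 1) k α ∧
          IsEvenSph (n + 1) k α} ∧
    (∀ a b, phiPullTS (n + 1) k (a + b) = phiPullTS (n + 1) k a + phiPullTS (n + 1) k b) ∧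
    (∀ (c : ℝ) a, phiPullTS (n + 1) k (c • a) = c • phiPullTS (n + 1) k a) := by
  have hdeg : 2 * (r : ℤ) + k = ((2 * r + k : ℕ) : ℤ) := by push_cast; ring
  rw [hdeg]
  refine ⟨⟨?_, ?_, ?_⟩, phiPullTS_add, phiPullTS_smul⟩
  · rintro _ ⟨⟨γ, hγ, rfl⟩, hbdry⟩
    exact ⟨⟨phiPull _ k γ, phiPull_mem_PL hγ, (phiPullTS_resSim γ).symm⟩,
      zeroOnGammaSph_phiPullTS hbdry, isEvenSph_phiPullTS _⟩
  · rintro _ ⟨⟨γ, hγ, rfl⟩, -⟩ _ ⟨⟨δ, hδ, rfl⟩, -⟩ h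
    exact resSim_eq_of_phiPullTS_eq (Nat.succ_ne_zero n) hγ hδ h
  · rintro _ ⟨⟨β, hβ, rfl⟩, hΓ, hβev⟩
    obtain ⟨γ, hγ, hγβ⟩ := exists_phiPull_eq (symmAvg_mem_PL hβ) (isEven_symmAvg β)
    have hpull : phiPullTS (n + 1) k (resSim (n + 1) k γ) = resSph (n + 1) k β := by
      rw [phiPullTS_resSim, hγβ, resSph_symmAvg rfl hβev]
    exact ⟨resSim _ k γ,
      ⟨⟨γ, hγ, rfl⟩, vanishBdry_of_zeroOnGammaSph (by omega) hγ (by rwa [hpull])⟩, hpull⟩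

theorem stmt10 (n k r : ℕ) (hn : 1 ≤ n) (hk : k ≤ n) :
    Set.BijOn (phiPullTS (n + 1) k) (PLosim (n + 1) k (r : ℤ))
      {α | α ∈ PLsph (n + 1) k (2 * (r : ℤ) + k) ∧ zeroOnGammaSph (n + 1) k α ∧
          IsEvenSph (n + 1) k α} ∧
    (∀ a b, phiPullTS (n + 1) k (a + b) = phiPullTS (n + 1) k a + phiPullTS (n + 1) k b) ∧
    (∀ (c : ℝ) a, phiPullTS (n + 1) k (c • a) = c • phiPullTS (n + 1) k a) :=
  stmt10_general n k r hn

end
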